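/- The poset P on a_1,…,a_n, b_1,…,b_n, c_0,…,c_n (n ≥ 2) generated by c_0 < … < c_n, a_i < c_i, c_{i−1} < b_i (1 ≤ i ≤ n), and a_i < b_j (1 ≤ j < i ≤ n), contains the standard example S_n as a subposet (on the points a_1,…,a_n,b_1,…,b_n), and hence dim(P) ≥ n. -/

import Mathlib

variable {α : Type*}

/-- A linear extension of a partial order, given as a binary relation. -/
def IsLinExt [PartialOrder α] (r : α → α → Prop) : Prop :=
  IsLinearOrder α r ∧ ∀ x y : α, x ≤ y → r x y

/-- A realizer: a family of linear extensions whose intersection is the order. -/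
def IsRealizer [PartialOrder α] {d : ℕ} (L : Fin d → α → α → Prop) : Prop :=
  (∀ i, IsLinExt (L i)) ∧ ∀ x y : α, x ≤ y ↔ ∀ i, L i x y

/-- The order dimension of a poset: the least positive `d` admitting a realizer of size `d`. -/
noncomputable def pdim (α : Type*) [PartialOrder α] : ℕ :=
  sInf {d | 0 < d ∧ ∃ L : Fin d → α → α → Prop, IsRealizer L}

/-- The set of (ordered) incomparable pairs of a poset. -/
def IncPairs (α : Type*) [PartialOrder α] : Set (α × α) :=
  {p | ¬ p.1 ≤ p.2 ∧ ¬ p.2 ≤ p.1}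

/-- `r` reverses every pair `(x, y)` in `S`, i.e. `x > y` in `r`. -/
def Reverses [PartialOrder α] (r : α → α → Prop) (S : Set (α × α)) : Prop :=
  ∀ p ∈ S, r p.2 p.1 ∧ ¬ r p.1 p.2

/-- A set of incomparable pairs is reversible if some linear extension reverses all of them. -/
def Reversible [PartialOrder α] (S : Set (α × α)) : Prop :=
  ∃ r, IsLinExt r ∧ Reverses r S

/-- `d` linear extensions suffice to reverse every pair of `S` (i.e. `dim S ≤ d`). -/
def RealizerOn [PartialOrder α] (d : ℕ) (S : Set (α × α)) : Prop :=
  ∃ L : Fin d → α → α → Prop, (∀ i, IsLinExt (L i)) ∧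
    ∀ p ∈ S, ∃ i, L i p.2 p.1 ∧ ¬ L i p.1 p.2

/-- The height of a subset of a poset: the maximum size of a chain contained in it. -/
noncomputable def heightSet [PartialOrder α] (S : Set α) : ℕ :=
  sSup {n | ∃ t : Finset α, ↑t ⊆ S ∧ IsChain (· ≤ ·) (↑t : Set α) ∧ t.card = n}

/-- The height of a poset: the maximum size of a chain. -/
noncomputable def pheight (α : Type*) [PartialOrder α] : ℕ :=
  heightSet (Set.univ : Set α)

/-- The standard example `S_d`: minimal elements `a_i = inl i`, maximal elements
`b_j = inr j`, with `a_i < b_j` iff `i ≠ j`. -/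
def StdEx (d : ℕ) : Type := Fin d ⊕ Fin d

def StdEx.le {d : ℕ} : StdEx d → StdEx d → Prop
  | .inl i, .inl j => i = j
  | .inr i, .inr j => i = j
  | .inl i, .inr j => i ≠ j
  | .inr _, .inl _ => False

theorem StdEx.le_refl' {d : ℕ} (x : StdEx d) : StdEx.le x x := by
  cases x <;> simp [StdEx.le]

theorem StdEx.le_trans' {d : ℕ} (x y z : StdEx d)
    (hxy : StdEx.le x y) (hyz : StdEx.le y z) : StdEx.le x z := by
  cases x <;> cases y <;> cases z <;> simp_all [StdEx.le]

theorem StdEx.le_antisymm' {d : ℕ} (x y : StdEx d)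
    (hxy : StdEx.le x y) (hyx : StdEx.le y x) : x = y := by
  cases x <;> cases y <;> simp_all [StdEx.le] <;> (subst_vars; rfl)

instance (d : ℕ) : PartialOrder (StdEx d) where
  le := StdEx.le
  le_refl := StdEx.le_refl'
  le_trans := StdEx.le_trans'
  le_antisymm := StdEx.le_antisymm'

/-- The Kelly-like poset on `a_1, …, a_n, b_1, …, b_n, c_0, …, c_n`
(here `KP.a i` is `a_{i+1}`, `KP.b i` is `b_{i+1}`, `KP.c i` is `c_i`). -/
inductive KP (n : ℕ) : Type where
  | a : Fin n → KP n
  | b : Fin n → KP n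
  | c : Fin (n + 1) → KP n

/-- The order generated by `c_0 < ⋯ < c_n`, `a_i < c_i`, `c_{i-1} < b_i` (`1 ≤ i ≤ n`),
and `a_i < b_j` (`1 ≤ j < i ≤ n`), written out explicitly (its transitive closure). -/
def KP.le {n : ℕ} : KP n → KP n → Prop
  | .a i, .a j => i = j
  | .b i, .b j => i = j
  | .c i, .c j => i.1 ≤ j.1
  | .a i, .c j => i.1 + 1 ≤ j.1
  | .a i, .b j => i ≠ j
  | .c i, .b j => i.1 ≤ j.1
  | _, _ => False

theorem KP.le_refl' {n : ℕ} (x : KP n) : KP.le x x := by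
  cases x <;> simp [KP.le]

theorem KP.le_trans' {n : ℕ} (x y z : KP n)
    (hxy : KP.le x y) (hyz : KP.le y z) : KP.le x z := by
  cases x <;> cases y <;> cases z <;>
    simp_all only [KP.le, ne_eq, Fin.ext_iff] <;> first | omega | exact not_false

theorem KP.le_antisymm' {n : ℕ} (x y : KP n)
    (hxy : KP.le x y) (hyx : KP.le y x) : x = y := by
  cases x <;> cases y <;> simp_all only [KP.le, ne_eq, Fin.ext_iff] <;>
    first | omega | exact congrArg _ (Fin.ext (by omega))

instance (n : ℕ) : PartialOrder (KP n) where
  le := KP.le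
  le_refl := KP.le_refl'
  le_trans := KP.le_trans'
  le_antisymm := KP.le_antisymm'

namespace StdEx

variable {n : ℕ}

def a (i : Fin n) : StdEx n := Sum.inl i

def b (j : Fin n) : StdEx n := Sum.inr j

theorem a_le_b_iff {i j : Fin n} : a i ≤ b j ↔ i ≠ j := Iff.rfl

end StdEx

section Realizer

variable [PartialOrder α]

theorem exists_isLinExt_not_rel {x y : α} (hxy : ¬ x ≤ y) : ∃ r, IsLinExt r ∧ ¬ r x y := by
  -- Adjoin `y < x` to the order; this stays antisymmetric because `x ≰ y`.
  let t : α → α → Prop := fun a b => a ≤ b ∨ (a ≤ y ∧ x ≤ b)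
  have : IsPartialOrder α t :=
    { refl := fun _ => Or.inl le_rfl
      trans := by
        rintro a b c (hab | ⟨hay, hxb⟩) (hbc | ⟨hby, hxc⟩)
        exacts [Or.inl (hab.trans hbc), Or.inr ⟨hab.trans hby, hxc⟩,
          Or.inr ⟨hay, hxb.trans hbc⟩, Or.inr ⟨hay, hxc⟩]
      antisymm := by
        rintro a b (hab | ⟨hay, hxb⟩) (hba | ⟨hby, hxa⟩)
        exacts [le_antisymm hab hba, absurd ((hxa.trans hab).trans hby) hxy,
          absurd ((hxb.trans hba).trans hay) hxy, absurd (hxb.trans hby) hxy] }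
  obtain ⟨r, hr, htr⟩ := extend_partialOrder t
  refine ⟨r, ⟨hr, fun a b hab => htr a b (Or.inl hab)⟩, fun hrxy => hxy ?_⟩
  have hryx : r y x := htr y x (Or.inr ⟨le_rfl, le_rfl⟩)
  exact (hr.antisymm x y hrxy hryx).le

theorem exists_isRealizer [Finite α] [Nonempty α] :
    ∃ d, 0 < d ∧ ∃ L : Fin d → α → α → Prop, IsRealizer L := by
  have hpair : ∀ p : α × α, ∃ r, IsLinExt r ∧ (¬ p.1 ≤ p.2 → ¬ r p.1 p.2) := by
    intro p
    by_cases hp : p.1 ≤ p.2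
    · obtain ⟨r, hr, hle⟩ := extend_partialOrder ((· ≤ ·) : α → α → Prop)
      exact ⟨r, ⟨hr, hle⟩, fun h => absurd hp h⟩
    · obtain ⟨r, hr, hnr⟩ := exists_isLinExt_not_rel hp
      exact ⟨r, hr, fun _ => hnr⟩
  choose r hr hnr using hpair
  let e := (Finite.equivFin (α × α)).symm
  refine ⟨Nat.card (α × α), Nat.card_pos, fun i => r (e i), fun i => hr _, fun x y =>
    ⟨fun h i => (hr _).2 x y h, fun h => by_contra fun hxy => ?_⟩⟩
  exact hnr (x, y) hxy (by simpa [e] using h (e.symm (x, y)))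

/-- In a realizer, one extension cannot reverse two critical pairs `(aᵢ, bᵢ)`, `(aⱼ, bⱼ)` of a
standard example: `aᵢ < bⱼ < aⱼ < bᵢ < aᵢ` would be a cycle. -/
theorem IsRealizer.le_of_stdEx_embedding {n d : ℕ} {L : Fin d → α → α → Prop}
    (hL : IsRealizer L) (f : StdEx n ↪o α) : n ≤ d := by
  obtain ⟨hlin, hle_iff⟩ := hL
  have hcritical : ∀ i : Fin n, ∃ k, ¬ L k (f (StdEx.a i)) (f (StdEx.b i)) := by
    intro i
    have hnle : ¬ f (StdEx.a i) ≤ f (StdEx.b i) := by simp [StdEx.a_le_b_iff]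
    simpa [hle_iff] using hnle
  choose k hk using hcritical
  refine Fin.le_of_injective k fun i j hij => by_contra fun hne => hk i ?_
  have hext := hlin (k i)
  have hbj_aj : L (k i) (f (StdEx.b j)) (f (StdEx.a j)) :=
    (hext.1.total _ _).resolve_left (hij ▸ hk j)
  have hai_bj : L (k i) (f (StdEx.a i)) (f (StdEx.b j)) :=
    hext.2 _ _ (f.le_iff_le.2 (StdEx.a_le_b_iff.2 hne))
  have haj_bi : L (k i) (f (StdEx.a j)) (f (StdEx.b i)) :=
    hext.2 _ _ (f.le_iff_le.2 (StdEx.a_le_b_iff.2 (Ne.symm hne)))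
  exact hext.1.trans _ _ _ (hext.1.trans _ _ _ hai_bj hbj_aj) haj_bi

theorem le_pdim_of_stdEx_embedding [Finite α] [Nonempty α] {n : ℕ} (f : StdEx n ↪o α) :
    n ≤ pdim α :=
  le_csInf exists_isRealizer fun _ ⟨_, _, hL⟩ => hL.le_of_stdEx_embedding f

end Realizer

namespace KP

instance (n : ℕ) : Finite (KP n) :=
  Finite.of_surjective (Sum.elim a (Sum.elim b c)) fun
    | a i => ⟨.inl i, rfl⟩
    | b i => ⟨.inr (.inl i), rfl⟩
    | c i => ⟨.inr (.inr i), rfl⟩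

instance (n : ℕ) : Nonempty (KP n) := ⟨c 0⟩

/-- For `i < j` the relation `aᵢ < bⱼ` comes from the chain `aᵢ < cᵢ ≤ c_{j-1} < bⱼ`. -/
def stdExEmbedding (n : ℕ) : StdEx n ↪o KP n :=
  OrderEmbedding.ofMapLEIff (Sum.elim a b) (by rintro (i | i) (j | j) <;> rfl)

end KP

theorem kp_contains_standard_example_general (n : ℕ) :
    Nonempty (StdEx n ↪o KP n) ∧ n ≤ pdim (KP n) := by
  exact ⟨⟨KP.stdExEmbedding n⟩, le_pdim_of_stdEx_embedding (KP.stdExEmbedding n)⟩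

/-- `KP n` contains the standard example `S_n` as a subposet (on the `a`'s and `b`'s),
hence `dim (KP n) ≥ n`. -/
theorem kp_contains_standard_example (n : ℕ) (hn : 2 ≤ n) :
    Nonempty (StdEx n ↪o KP n) ∧ n ≤ pdim (KP n) :=
  kp_contains_standard_example_general n
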